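/- Consider horizon T ≥ 2 and the COLDQ setup: 𝒳 ⊆ ℝ^p convex with ‖x − y‖ ≤ R for all x, y ∈ 𝒳 (R > 0); convex losses f_t with subgradient maps ∇f_t satisfying ‖∇f_t(x)‖ ≤ D and f_t(y) ≥ f_t(x) + ⟨∇f_t(x), y − x⟩ on 𝒳; convex constraints g_t^n (1 ≤ n ≤ N) with |g_t^n(x)| ≤ G on 𝒳; step sizes α_t = t^{(1−V_x)/2} for some fixed V_x ∈ [0,1]; parameters η = 1/T and γ = ε·T with ε ∈ (0, G); x_1 ∈ 𝒳 arbitrary, Q_1^n = γ, and for t ∈ {2,…,T}: x_t minimizes Φ_t(x) = ⟨∇f_{t−1}(x_{t−1}), x − x_{t−1}⟩ + α_{t−1}·‖x − x_{t−1}‖² + Σ_{n=1}^N Q_{t−1}^n·[g_{t−1}^n(x)]_+ over 𝒳 and Q_t^n = max{(1−η)·Q_{t−1}^n + [g_t^n(x_t)]_+ , γ}. Suppose benchmarks x_t* ∈ 𝒳 with g_t^n(x_t*) ≤ 0 satisfy Σ_{t=2}^T ‖x_t* − x_{t−1}*‖ ≤ C_x·T^{V_x}, and that for all x ∈ 𝒳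 and t ≥ 2, (Σ_{n=1}^N (g_t^n(x) − g_{t−1}^n(x))²)^{1/2} ≤ B_t with Σ_{t=2}^T B_t ≤ C_g·T^{V_g} for some fixed V_g ∈ [0,1] and constants C_x, C_g ≥ 0. Then the hard constraint violation satisfies Σ_{n=1}^N Σ_{t=1}^T [g_t^n(x_t)]_+ ≤ ((G·√N·C_g + 2·R·C_x + D²/(2·(1+V_x)) + D·R + 2·N·G² + R²)/ε + N·G)·T^{V_g}. -/

import Mathlib

open scoped RealInnerProductSpace

/-!
Write `P_t(x) = ∑ₙ Q_tⁿ [g_tⁿ(x)]₊`. Since the update with `η = 1/T` keeps `εT = γ ≤ Q_tⁿ ≤ GT`,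
the violation at step `t` is at most `P_{t-1}(x_t) / γ` plus the drift `√N · GT · B_t / γ`
(Cauchy–Schwarz, `[·]₊` being 1-Lipschitz). The three-point inequality for the proximal step,
tested at the feasible benchmark `x*_{t-1}`, gives
`P_{t-1}(x_t) ≤ DR + D²/(4α_{t-1}) + α_{t-1} (‖x*_{t-1} - x_{t-1}‖² - ‖x*_{t-1} - x_t‖²)`.
Summed over `t`, the last terms telescope up to `α_{T-1} R²` plus the benchmark's path length
weighted by `α ≤ T^{(1-V_x)/2}`, while `∑ 1/α_{t-1} ≤ 2T/(1 + V_x)`; dividing by `γ = εT` leaves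
`O(T^{V_g})`.
-/

section

open Filter Topology Finset

theorem norm_one_sub_smul_add_smul_sq {E : Type*} [NormedAddCommGroup E] [InnerProductSpace ℝ E]
    (u v : E) (l : ℝ) :
    ‖(1 - l) • u + l • v‖ ^ 2 = (1 - l) * ‖u‖ ^ 2 + l * ‖v‖ ^ 2 - l * (1 - l) * ‖u - v‖ ^ 2 := by
  rw [norm_add_sq_real, norm_sub_sq_real, norm_smul, norm_smul, real_inner_smul_left,
    real_inner_smul_right, Real.norm_eq_abs, Real.norm_eq_abs, mul_pow, mul_pow, sq_abs, sq_abs]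
  ring

theorem ConvexOn.add_sq_norm_sub_le_of_isMinOn {E : Type*} [NormedAddCommGroup E]
    [InnerProductSpace ℝ E] {s : Set E} {ψ : E → ℝ} {c : ℝ} {z a y : E}
    (hψ : ConvexOn ℝ s ψ) (ha : a ∈ s)
    (hmin : IsMinOn (fun u => ψ u + c * ‖u - z‖ ^ 2) s a) (hy : y ∈ s) :
    ψ a + c * ‖a - z‖ ^ 2 + c * ‖y - a‖ ^ 2 ≤ ψ y + c * ‖y - z‖ ^ 2 := by
  have hstep : ∀ l ∈ Set.Ioc (0 : ℝ) 1, ψ a + c * ‖a - z‖ ^ 2 + c * ‖y - a‖ ^ 2 ≤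
      ψ y + c * ‖y - z‖ ^ 2 + l * (c * ‖y - a‖ ^ 2) := by
    -- test the minimality of `a` at `(1 - l) • a + l • y`, then let `l → 0⁺`
    rintro l ⟨hl0, hl1⟩
    have hw := isMinOn_iff.1 hmin ((1 - l) • a + l • y)
      (hψ.1 ha hy (sub_nonneg.2 hl1) hl0.le (sub_add_cancel 1 l))
    have hψw := hψ.2 ha hy (sub_nonneg.2 hl1) hl0.le (sub_add_cancel 1 l)
    have hwz : (1 - l) • a + l • y - z = (1 - l) • (a - z) + l • (y - z) := by module
    rw [hwz, norm_one_sub_smul_add_smul_sq, sub_sub_sub_cancel_right, norm_sub_rev a y] at hw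
    simp only [smul_eq_mul] at hψw
    have : l * (ψ a + c * ‖a - z‖ ^ 2 + c * ‖y - a‖ ^ 2) ≤
        l * (ψ y + c * ‖y - z‖ ^ 2 + l * (c * ‖y - a‖ ^ 2)) := by
      nlinarith
    exact le_of_mul_le_mul_left this hl0
  have hlim : Tendsto (fun l : ℝ => ψ y + c * ‖y - z‖ ^ 2 + l * (c * ‖y - a‖ ^ 2)) (𝓝[>] 0)
      (𝓝 (ψ y + c * ‖y - z‖ ^ 2)) := by
    simpa using (tendsto_const_nhds.add ((tendsto_id (x := 𝓝 (0 : ℝ))).mul_const _)).mono_left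
      nhdsWithin_le_nhds
  exact ge_of_tendsto hlim (eventually_of_mem (Ioc_mem_nhdsGT one_pos) hstep)

theorem convexOn_sum {𝕜 E β ι : Type*} [Semiring 𝕜] [PartialOrder 𝕜] [AddCommMonoid E]
    [AddCommMonoid β] [PartialOrder β] [IsOrderedAddMonoid β] [SMul 𝕜 E] [Module 𝕜 β]
    {s : Set E} (hs : Convex 𝕜 s) (t : Finset ι) {f : ι → E → β}
    (hf : ∀ i ∈ t, ConvexOn 𝕜 s (f i)) : ConvexOn 𝕜 s (fun x => ∑ i ∈ t, f i x) := by
  classical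
  induction t using Finset.induction_on with
  | empty => simpa using convexOn_const 0 hs
  | insert i t hi ih =>
    simp only [Finset.sum_insert hi]
    exact (hf i (mem_insert_self i t)).add (ih fun j hj => hf j (mem_insert_of_mem hj))

theorem convexOn_sum_mul_max_zero {E ι : Type*} [AddCommGroup E] [Module ℝ E] {s : Set E}
    (hs : Convex ℝ s) (t : Finset ι) {Q : ι → ℝ} {g : ι → E → ℝ} (hQ : ∀ i ∈ t, 0 ≤ Q i)
    (hg : ∀ i ∈ t, ConvexOn ℝ s (g i)) :
    ConvexOn ℝ s (fun x => ∑ i ∈ t, Q i * max (g i x) 0) :=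
  convexOn_sum hs t fun i hi => ((hg i hi).sup (convexOn_const 0 hs)).smul (hQ i hi)

theorem mul_sub_mul_sq_le_sq_div {D c r : ℝ} (hc : 0 < c) :
    D * r - c * r ^ 2 ≤ D ^ 2 / (4 * c) := by
  rw [le_div_iff₀ (by positivity)]
  nlinarith [sq_nonneg (D - 2 * c * r)]

theorem penalty_le_of_isMinOn_prox {E : Type*} [NormedAddCommGroup E]
    [InnerProductSpace ℝ E] {s : Set E} {P : E → ℝ} {v z a y : E} {c D R : ℝ}
    (hP : ConvexOn ℝ s P) (hc : 0 < c) (ha : a ∈ s) (hy : y ∈ s)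
    (hmin : IsMinOn (fun u => ⟪v, u - z⟫ + c * ‖u - z‖ ^ 2 + P u) s a)
    (hv : ‖v‖ ≤ D) (hyz : ‖y - z‖ ≤ R) :
    P a ≤ P y + D * R + D ^ 2 / (4 * c) + c * (‖y - z‖ ^ 2 - ‖y - a‖ ^ 2) := by
  have hψ : ConvexOn ℝ s fun u => ⟪v, u⟫ + P u := ((innerₛₗ ℝ v).convexOn hP.1).add hP
  have hthree := hψ.add_sq_norm_sub_le_of_isMinOn ha (z := z) (c := c) (isMinOn_iff.2 fun u hu => by
    have := isMinOn_iff.1 hmin u hu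
    simp only [inner_sub_right] at this
    linarith) hy
  have hvy : ⟪v, y - z⟫ ≤ D * R :=
    (real_inner_le_norm v _).trans (mul_le_mul hv hyz (norm_nonneg _) ((norm_nonneg v).trans hv))
  have hva : -⟪v, a - z⟫ ≤ D * ‖a - z‖ :=
    (neg_le_abs _).trans ((abs_real_inner_le_norm v _).trans
      (mul_le_mul_of_nonneg_right hv (norm_nonneg _)))
  have hyoung := mul_sub_mul_sq_le_sq_div (D := D) (r := ‖a - z‖) hc
  simp only [inner_sub_right] at hvy hva
  linarith

theorem sum_mul_max_zero_le_add {ι : Type*} (t : Finset ι) {Q a b : ι → ℝ} {M B : ℝ}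
    (hQ : ∀ i ∈ t, Q i ∈ Set.Icc 0 M) (hab : √(∑ i ∈ t, (a i - b i) ^ 2) ≤ B) :
    ∑ i ∈ t, Q i * max (a i) 0 ≤ ∑ i ∈ t, Q i * max (b i) 0 + √(#t) * M * B := by
  rcases t.eq_empty_or_nonempty with rfl | ⟨j, hj⟩
  · simp
  have hM : 0 ≤ M := (hQ j hj).1.trans (hQ j hj).2
  have hlip : ∑ i ∈ t, Q i * (max (a i) 0 - max (b i) 0) ≤ ∑ i ∈ t, Q i * |a i - b i| :=
    sum_le_sum fun i hi => mul_le_mul_of_nonneg_left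
      ((le_abs_self _).trans (abs_max_sub_max_le_abs _ _ 0)) (hQ i hi).1
  have hcs := Real.sum_mul_le_sqrt_mul_sqrt t Q fun i => |a i - b i|
  have hQsq : √(∑ i ∈ t, Q i ^ 2) ≤ √(#t) * M :=
    calc √(∑ i ∈ t, Q i ^ 2) ≤ √(∑ _i ∈ t, M ^ 2) :=
          Real.sqrt_le_sqrt (sum_le_sum fun i hi => pow_le_pow_left₀ (hQ i hi).1 (hQ i hi).2 2)
      _ = √(#t) * M := by
          rw [sum_const, nsmul_eq_mul, Real.sqrt_mul (Nat.cast_nonneg _), Real.sqrt_sq hM]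
  simp only [sq_abs] at hcs
  simp only [mul_sub, sum_sub_distrib] at hlip
  nlinarith [mul_le_mul hQsq hab (Real.sqrt_nonneg _) (by positivity)]

theorem violation_step_le {E ι : Type*} [NormedAddCommGroup E] [InnerProductSpace ℝ E]
    [Fintype ι] {s : Set E} {g g' : ι → E → ℝ} {Q : ι → ℝ} {v z a y : E} {γ M c D R B : ℝ}
    (hs : Convex ℝ s) (hg : ∀ i, ConvexOn ℝ s (g i)) (hQ : ∀ i, Q i ∈ Set.Icc γ M) (hγ : 0 ≤ γ)
    (hc : 0 < c) (ha : a ∈ s) (hy : y ∈ s)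
    (hmin : IsMinOn (fun u => ⟪v, u - z⟫ + c * ‖u - z‖ ^ 2 + ∑ i, Q i * max (g i u) 0) s a)
    (hv : ‖v‖ ≤ D) (hyz : ‖y - z‖ ≤ R) (hgy : ∀ i, g i y ≤ 0)
    (hB : √(∑ i, (g' i a - g i a) ^ 2) ≤ B) :
    γ * ∑ i, max (g' i a) 0 ≤
      D * R + D ^ 2 / (4 * c) + c * (‖y - z‖ ^ 2 - ‖y - a‖ ^ 2) + √(Fintype.card ι) * M * B := by
  have hQ0 : ∀ i ∈ univ, Q i ∈ Set.Icc 0 M := fun i _ => ⟨hγ.trans (hQ i).1, (hQ i).2⟩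
  have hprox := penalty_le_of_isMinOn_prox
    (convexOn_sum_mul_max_zero hs univ (fun i hi => (hQ0 i hi).1) fun i _ => hg i) hc ha hy hmin
    hv hyz
  have hPy : ∑ i, Q i * max (g i y) 0 = 0 :=
    sum_eq_zero fun i _ => by rw [max_eq_right (hgy i), mul_zero]
  have hdrift := sum_mul_max_zero_le_add univ hQ0 hB
  have hγQ : γ * ∑ i, max (g' i a) 0 ≤ ∑ i, Q i * max (g' i a) 0 := by
    rw [mul_sum]
    exact sum_le_sum fun i _ => mul_le_mul_of_nonneg_right (hQ i).1 (le_max_right _ _)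
  rw [card_univ] at hdrift
  linarith

theorem queue_mem_Icc {ι : Type*} {T : ℕ} {γ G : ℝ} {Q r : ℕ → ι → ℝ} (hγG : γ ≤ G * T)
    (hr : ∀ t, 2 ≤ t → t ≤ T → ∀ n, r t n ≤ G) (hQ1 : ∀ n, Q 1 n = γ)
    (hQ : ∀ t, 2 ≤ t → t ≤ T → ∀ n, Q t n = max ((1 - 1 / (T : ℝ)) * Q (t - 1) n + r t n) γ) :
    ∀ t, 1 ≤ t → t ≤ T → ∀ n, Q t n ∈ Set.Icc γ (G * T) := by
  intro t ht
  induction t, ht using Nat.le_induction with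
  | base => exact fun _ n => by rw [hQ1 n]; exact ⟨le_rfl, hγG⟩
  | succ t ht ih =>
    intro htT n
    rw [hQ (t + 1) (by omega) htT n, Nat.add_sub_cancel]
    refine ⟨le_max_right _ _, max_le ?_ hγG⟩
    have hT : (1 : ℝ) ≤ T := by exact_mod_cast (by omega : 1 ≤ T)
    have hη : 0 ≤ 1 - 1 / (T : ℝ) := sub_nonneg.2 ((div_le_one (by positivity)).2 hT)
    calc (1 - 1 / (T : ℝ)) * Q t n + r (t + 1) n ≤ (1 - 1 / (T : ℝ)) * (G * T) + G :=
          add_le_add (mul_le_mul_of_nonneg_left (ih (by omega) n).2 hη) (hr _ (by omega) htT n)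
      _ = G * T := by field_simp; ring

theorem rpow_le_rpow_add_mul_rpow_sub_one_mul_sub {x y p : ℝ} (hx : 0 < x) (hy : 0 ≤ y)
    (hp0 : 0 ≤ p) (hp1 : p ≤ 1) : y ^ p ≤ x ^ p + p * x ^ (p - 1) * (y - x) := by
  have hb := rpow_one_add_le_one_add_mul_self (s := (y - x) / x)
    (by rw [le_div_iff₀ hx]; linarith) hp0 hp1
  rw [show 1 + (y - x) / x = y / x by field_simp; ring, Real.div_rpow hy hx.le,
    div_le_iff₀ (Real.rpow_pos_of_pos hx p)] at hb
  rw [Real.rpow_sub_one hx.ne']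
  calc y ^ p ≤ (1 + p * ((y - x) / x)) * x ^ p := hb
    _ = x ^ p + p * (x ^ p / x) * (y - x) := by field_simp

theorem sum_Icc_rpow_neg_le {β : ℝ} (hβ0 : 0 ≤ β) (hβ1 : β < 1) (M : ℕ) :
    ∑ t ∈ Icc 2 (M + 1), ((t - 1 : ℕ) : ℝ) ^ (-β) ≤ (M : ℝ) ^ (1 - β) / (1 - β) := by
  induction M with
  | zero => simp [Real.zero_rpow (by linarith : 1 - β ≠ 0)]
  | succ M ih =>
    rw [sum_Icc_succ_top (by omega), Nat.add_sub_cancel]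
    have hconc := rpow_le_rpow_add_mul_rpow_sub_one_mul_sub (x := M + 1) (y := M) (p := 1 - β)
      (by positivity) (Nat.cast_nonneg M) (by linarith) (by linarith)
    have hstep : ((M + 1 : ℕ) : ℝ) ^ (-β) ≤
        (((M + 1 : ℕ) : ℝ) ^ (1 - β) - (M : ℝ) ^ (1 - β)) / (1 - β) := by
      rw [le_div_iff₀ (by linarith)]
      rw [show 1 - β - 1 = -β by ring] at hconc
      push_cast
      linarith
    calc _ ≤ (M : ℝ) ^ (1 - β) / (1 - β) +
          (((M + 1 : ℕ) : ℝ) ^ (1 - β) - (M : ℝ) ^ (1 - β)) / (1 - β) := add_le_add ih hstep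
      _ = _ := by ring

theorem sum_Icc_sq_div_rpow_le {T : ℕ} {V D : ℝ} {α : ℕ → ℝ}
    (hα : ∀ t, α t = (t : ℝ) ^ ((1 - V) / 2)) (hT : 1 ≤ T) (hV0 : -1 < V) (hV1 : V ≤ 1) :
    ∑ t ∈ Icc 2 T, D ^ 2 / (4 * α (t - 1)) ≤ D ^ 2 / (2 * (1 + V)) * T := by
  obtain ⟨M, rfl⟩ : ∃ M, T = M + 1 := ⟨T - 1, by omega⟩
  have hterm : ∀ t ∈ Icc 2 (M + 1), D ^ 2 / (4 * α (t - 1)) =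
      D ^ 2 / 4 * ((t - 1 : ℕ) : ℝ) ^ (-((1 - V) / 2)) := fun t _ => by
    rw [hα, Real.rpow_neg (Nat.cast_nonneg _)]; ring
  have hpow : (M : ℝ) ^ (1 - (1 - V) / 2) ≤ M + 1 :=
    (Real.rpow_le_rpow (Nat.cast_nonneg M) (by linarith) (by linarith)).trans
      (Real.rpow_le_self_of_one_le (by linarith [(Nat.cast_nonneg M : (0 : ℝ) ≤ M)]) (by linarith))
  rw [sum_congr rfl hterm, ← mul_sum]
  calc D ^ 2 / 4 * ∑ t ∈ Icc 2 (M + 1), ((t - 1 : ℕ) : ℝ) ^ (-((1 - V) / 2))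
      ≤ D ^ 2 / 4 * ((M + 1) / (1 - (1 - V) / 2)) := by
        gcongr
        exact (sum_Icc_rpow_neg_le (by linarith) (by linarith) M).trans
          (div_le_div_of_nonneg_right hpow (by linarith))
    _ = D ^ 2 / (2 * (1 + V)) * ((M + 1 : ℕ) : ℝ) := by
        push_cast
        field_simp
        ring

theorem sum_Icc_mul_sub_le {α a : ℕ → ℝ} {A : ℝ} {T : ℕ} (hα0 : ∀ t, 0 ≤ α t) (hα : Monotone α)
    (hT : 1 ≤ T) (ha : ∀ t, 1 ≤ t → t ≤ T → a t ≤ A) :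
    ∑ t ∈ Icc 2 T, α (t - 1) * (a (t - 1) - a t) ≤ α (T - 1) * (A - a T) := by
  induction T, hT using Nat.le_induction with
  | base => simpa using mul_nonneg (hα0 0) (sub_nonneg.2 (ha 1 le_rfl le_rfl))
  | succ M hM ih =>
    rw [sum_Icc_succ_top (by omega), Nat.add_sub_cancel]
    have hprev := ih fun t h1 h2 => ha t h1 (by omega)
    have hαM := mul_le_mul_of_nonneg_right (hα (Nat.sub_le M 1))
      (sub_nonneg.2 (ha M hM (by omega)))
    nlinarith

theorem sq_norm_sub_sq_norm_le {E : Type*} [SeminormedAddCommGroup E] {u w : E} {R : ℝ}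
    (hu : ‖u‖ ≤ R) (hw : ‖w‖ ≤ R) : ‖u‖ ^ 2 - ‖w‖ ^ 2 ≤ 2 * R * ‖u - w‖ := by
  calc ‖u‖ ^ 2 - ‖w‖ ^ 2 = (‖u‖ - ‖w‖) * (‖u‖ + ‖w‖) := by ring
    _ ≤ ‖u - w‖ * (2 * R) :=
        mul_le_mul (norm_sub_norm_le u w) (by linarith) (by positivity) (norm_nonneg _)
    _ = 2 * R * ‖u - w‖ := by ring

theorem sum_Icc_mul_sq_norm_sub_le {E : Type*} [SeminormedAddCommGroup E] {s : Set E} {R A : ℝ}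
    {T : ℕ} {α : ℕ → ℝ} {x y : ℕ → E} (hs : ∀ u ∈ s, ∀ w ∈ s, ‖u - w‖ ≤ R)
    (hα0 : ∀ t, 0 ≤ α t) (hα : Monotone α) (hαA : α (T - 1) ≤ A) (hT : 1 ≤ T)
    (hx : ∀ t, 1 ≤ t → t ≤ T → x t ∈ s) (hy : ∀ t, 1 ≤ t → t ≤ T → y t ∈ s) :
    ∑ t ∈ Icc 2 T, α (t - 1) * (‖y (t - 1) - x (t - 1)‖ ^ 2 - ‖y (t - 1) - x t‖ ^ 2) ≤
      A * (R ^ 2 + 2 * R * ∑ t ∈ Icc 2 T, ‖y t - y (t - 1)‖) := by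
  have hR : 0 ≤ R := (norm_nonneg _).trans (hs _ (hx 1 le_rfl hT) _ (hx 1 le_rfl hT))
  have hterm : ∀ t ∈ Icc 2 T,
      α (t - 1) * (‖y (t - 1) - x (t - 1)‖ ^ 2 - ‖y (t - 1) - x t‖ ^ 2) ≤
        α (t - 1) * (‖y (t - 1) - x (t - 1)‖ ^ 2 - ‖y t - x t‖ ^ 2) +
          A * (2 * R * ‖y t - y (t - 1)‖) := by
    intro t ht
    obtain ⟨h2, hT'⟩ := mem_Icc.1 ht
    have hsq := sq_norm_sub_sq_norm_le (hs _ (hy t (by omega) hT') _ (hx t (by omega) hT'))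
      (hs _ (hy (t - 1) (by omega) (by omega)) _ (hx t (by omega) hT'))
    rw [sub_sub_sub_cancel_right] at hsq
    have hαt : α (t - 1) ≤ A := (hα (by omega)).trans hαA
    nlinarith [mul_le_mul_of_nonneg_left hsq (hα0 (t - 1)),
      mul_le_mul_of_nonneg_right hαt (by positivity : 0 ≤ 2 * R * ‖y t - y (t - 1)‖)]
  have htel := sum_Icc_mul_sub_le (a := fun t => ‖y t - x t‖ ^ 2) (A := R ^ 2) hα0 hα hT
    fun t h1 h2 => pow_le_pow_left₀ (norm_nonneg _) (hs _ (hy t h1 h2) _ (hx t h1 h2)) 2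
  have hlast : α (T - 1) * (R ^ 2 - ‖y T - x T‖ ^ 2) ≤ A * R ^ 2 := by
    nlinarith [mul_nonneg (hα0 (T - 1)) (sq_nonneg ‖y T - x T‖),
      mul_le_mul_of_nonneg_right hαA (sq_nonneg R)]
  calc _ ≤ ∑ t ∈ Icc 2 T, (α (t - 1) * (‖y (t - 1) - x (t - 1)‖ ^ 2 - ‖y t - x t‖ ^ 2) +
          A * (2 * R * ‖y t - y (t - 1)‖)) := sum_le_sum hterm
    _ = ∑ t ∈ Icc 2 T, α (t - 1) * (‖y (t - 1) - x (t - 1)‖ ^ 2 - ‖y t - x t‖ ^ 2) +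
          A * (2 * R * ∑ t ∈ Icc 2 T, ‖y t - y (t - 1)‖) := by
        rw [sum_add_distrib, ← mul_sum, ← mul_sum]
    _ ≤ _ := by linarith

theorem sum_Icc_prox_terms_le {E : Type*} [SeminormedAddCommGroup E] {s : Set E}
    {T : ℕ} {V C D R : ℝ} {α : ℕ → ℝ} {x y : ℕ → E} (hT : 1 ≤ T) (hV0 : -1 < V) (hV1 : V ≤ 1)
    (hC : 0 ≤ C) (hD : 0 ≤ D) (hα : ∀ t, α t = (t : ℝ) ^ ((1 - V) / 2))
    (hs : ∀ u ∈ s, ∀ w ∈ s, ‖u - w‖ ≤ R)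
    (hx : ∀ t, 1 ≤ t → t ≤ T → x t ∈ s) (hy : ∀ t, 1 ≤ t → t ≤ T → y t ∈ s)
    (hpath : ∑ t ∈ Icc 2 T, ‖y t - y (t - 1)‖ ≤ C * (T : ℝ) ^ V) :
    ∑ t ∈ Icc 2 T, (D * R + D ^ 2 / (4 * α (t - 1)) +
        α (t - 1) * (‖y (t - 1) - x (t - 1)‖ ^ 2 - ‖y (t - 1) - x t‖ ^ 2)) ≤
      T * (D * R + D ^ 2 / (2 * (1 + V)) + R ^ 2 + 2 * R * C) := by
  have hR : 0 ≤ R := (norm_nonneg _).trans (hs _ (hx 1 le_rfl hT) _ (hx 1 le_rfl hT))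
  have hT1 : (1 : ℝ) ≤ T := by exact_mod_cast hT
  have hα0 : ∀ t, 0 ≤ α t := fun t => by rw [hα]; positivity
  have hαmono : Monotone α := fun t u htu => by
    rw [hα, hα]; exact Real.rpow_le_rpow (Nat.cast_nonneg _) (by exact_mod_cast htu) (by linarith)
  have hαT : α (T - 1) ≤ (T : ℝ) ^ ((1 - V) / 2) := by
    rw [hα]
    exact Real.rpow_le_rpow (Nat.cast_nonneg _) (by exact_mod_cast Nat.sub_le T 1) (by linarith)
  have hTβ : (T : ℝ) ^ ((1 - V) / 2) ≤ T :=
    Real.rpow_le_self_of_one_le hT1 (by linarith)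
  have hTβV : (T : ℝ) ^ ((1 - V) / 2) * (T : ℝ) ^ V ≤ T := by
    rw [← Real.rpow_add (by positivity)]; exact Real.rpow_le_self_of_one_le hT1 (by linarith)
  have hDR : ∑ _t ∈ Icc 2 T, D * R ≤ T * (D * R) := by
    rw [sum_const, Nat.card_Icc, nsmul_eq_mul]
    exact mul_le_mul_of_nonneg_right (by exact_mod_cast (by omega : T + 1 - 2 ≤ T)) (by positivity)
  have hquad := sum_Icc_sq_div_rpow_le (D := D) hα hT hV0 hV1
  have hprox := sum_Icc_mul_sq_norm_sub_le hs hα0 hαmono hαT hT hx hy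
  have h1 := mul_le_mul_of_nonneg_right hTβ (sq_nonneg R)
  have h2 := mul_le_mul_of_nonneg_left hpath
    (by positivity : 0 ≤ 2 * R * (T : ℝ) ^ ((1 - V) / 2))
  have h3 := mul_le_mul_of_nonneg_left hTβV (by positivity : 0 ≤ 2 * R * C)
  rw [sum_add_distrib, sum_add_distrib]
  linarith

end

theorem coldq_hard_violation_explicit_general
    (p N T : ℕ) (hT : 2 ≤ T) (R D G η γ ε Vx Vg Cx Cg : ℝ)
    (hVx0 : 0 ≤ Vx) (hVx1 : Vx ≤ 1)
    (hVg0 : 0 ≤ Vg) (hCx : 0 ≤ Cx)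
    (hε0 : 0 < ε) (hεG : ε < G)
    (hη : η = 1 / (T : ℝ)) (hγ : γ = ε * (T : ℝ))
    (𝒳 : Set (EuclideanSpace ℝ (Fin p)))
    (hXconv : Convex ℝ 𝒳)
    (hXbdd : ∀ x ∈ 𝒳, ∀ y ∈ 𝒳, ‖x - y‖ ≤ R)
    (gradf : ℕ → EuclideanSpace ℝ (Fin p) → EuclideanSpace ℝ (Fin p))
    (hgradD : ∀ t, ∀ x ∈ 𝒳, ‖gradf t x‖ ≤ D)
    (g : ℕ → Fin N → EuclideanSpace ℝ (Fin p) → ℝ)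
    (hgconv : ∀ t n, ConvexOn ℝ 𝒳 (g t n))
    (hgG : ∀ t n, ∀ x ∈ 𝒳, |g t n x| ≤ G)
    (α : ℕ → ℝ) (hα : ∀ t, α t = (t : ℝ) ^ ((1 - Vx) / 2))
    (x : ℕ → EuclideanSpace ℝ (Fin p)) (hx1 : x 1 ∈ 𝒳)
    (Q : ℕ → Fin N → ℝ) (hQ1 : ∀ n, Q 1 n = γ)
    (hxX : ∀ t, 2 ≤ t → t ≤ T → x t ∈ 𝒳)
    (hxmin : ∀ t, 2 ≤ t → t ≤ T → ∀ y ∈ 𝒳,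
      ⟪gradf (t - 1) (x (t - 1)), x t - x (t - 1)⟫
          + α (t - 1) * ‖x t - x (t - 1)‖ ^ 2
          + ∑ n, Q (t - 1) n * max (g (t - 1) n (x t)) 0 ≤
        ⟪gradf (t - 1) (x (t - 1)), y - x (t - 1)⟫
          + α (t - 1) * ‖y - x (t - 1)‖ ^ 2
          + ∑ n, Q (t - 1) n * max (g (t - 1) n y) 0)
    (hQupd : ∀ t, 2 ≤ t → t ≤ T → ∀ n,
      Q t n = max ((1 - η) * Q (t - 1) n + max (g t n (x t)) 0) γ)
    (xstar : ℕ → EuclideanSpace ℝ (Fin p))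
    (hxstarX : ∀ t, 1 ≤ t → t ≤ T → xstar t ∈ 𝒳)
    (hxstarfeas : ∀ t, 1 ≤ t → t ≤ T → ∀ n, g t n (xstar t) ≤ 0)
    (hpath : ∑ t ∈ Finset.Icc 2 T, ‖xstar t - xstar (t - 1)‖ ≤ Cx * (T : ℝ) ^ Vx)
    (B : ℕ → ℝ)
    (hB : ∀ t, 2 ≤ t → t ≤ T → ∀ x ∈ 𝒳,
      Real.sqrt (∑ n, (g t n x - g (t - 1) n x) ^ 2) ≤ B t)
    (hBsum : ∑ t ∈ Finset.Icc 2 T, B t ≤ Cg * (T : ℝ) ^ Vg) :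
    ∑ n : Fin N, ∑ t ∈ Finset.Icc 1 T, max (g t n (x t)) 0 ≤
      ((G * Real.sqrt N * Cg + 2 * R * Cx + D ^ 2 / (2 * (1 + Vx))
          + D * R + 2 * N * G ^ 2 + R ^ 2) / ε + N * G)
        * (T : ℝ) ^ Vg := by
  subst hη hγ
  have hG : 0 < G := hε0.trans hεG
  have hD : 0 ≤ D := (norm_nonneg _).trans (hgradD 1 _ hx1)
  have hT0 : (0 : ℝ) < T := by positivity
  have hTVg : 1 ≤ (T : ℝ) ^ Vg := Real.one_le_rpow (by exact_mod_cast (by omega : 1 ≤ T)) hVg0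
  have hx : ∀ t, 1 ≤ t → t ≤ T → x t ∈ 𝒳 := fun t h1 h2 =>
    (eq_or_lt_of_le h1).elim (fun h => h ▸ hx1) fun h => hxX t h h2
  have hQ := queue_mem_Icc (mul_le_mul_of_nonneg_right hεG.le hT0.le)
    (fun t h2 hT' n => max_le (abs_le.1 (hgG t n _ (hxX t h2 hT'))).2 hG.le) hQ1 hQupd
  have hstep : ∀ t ∈ Finset.Icc 2 T, ε * T * ∑ n, max (g t n (x t)) 0 ≤
      D * R + D ^ 2 / (4 * α (t - 1)) + α (t - 1) *
        (‖xstar (t - 1) - x (t - 1)‖ ^ 2 - ‖xstar (t - 1) - x t‖ ^ 2) + √N * (G * T) * B t := by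
    intro t ht
    obtain ⟨h2, hT'⟩ := Finset.mem_Icc.1 ht
    have h1 : 1 ≤ t - 1 := by omega
    have h1T : t - 1 ≤ T := by omega
    have hc : 0 < α (t - 1) := by rw [hα]; exact Real.rpow_pos_of_pos (by exact_mod_cast h1) _
    simpa only [Fintype.card_fin] using violation_step_le hXconv (hgconv (t - 1))
      (hQ (t - 1) h1 h1T) (by positivity) hc (hxX t h2 hT') (hxstarX _ h1 h1T)
      (isMinOn_iff.2 (hxmin t h2 hT')) (hgradD _ _ (hx _ h1 h1T))
      (hXbdd _ (hxstarX _ h1 h1T) _ (hx _ h1 h1T)) (hxstarfeas _ h1 h1T)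
      (hB t h2 hT' _ (hxX t h2 hT'))
  have hprox :=
    sum_Icc_prox_terms_le (by omega) (by linarith) hVx1 hCx hD hα hXbdd hx hxstarX hpath
  have hBs := mul_le_mul_of_nonneg_left hBsum (by positivity : 0 ≤ √N * (G * T))
  have hsum := Finset.sum_le_sum hstep
  rw [← Finset.mul_sum, Finset.sum_add_distrib, ← Finset.mul_sum] at hsum
  have hK0 : 0 ≤ D * R + D ^ 2 / (2 * (1 + Vx)) + R ^ 2 + 2 * R * Cx := by
    have hR : 0 ≤ R := (norm_nonneg _).trans (hXbdd _ hx1 _ hx1)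
    positivity
  have hS : ∑ t ∈ Finset.Icc 2 T, ∑ n, max (g t n (x t)) 0 ≤
      (G * √N * Cg + 2 * R * Cx + D ^ 2 / (2 * (1 + Vx)) + D * R + 2 * N * G ^ 2 + R ^ 2)
        * (T : ℝ) ^ Vg / ε := by
    rw [le_div_iff₀ hε0]
    refine le_of_mul_le_mul_left ?_ hT0
    linarith [mul_nonneg hT0.le (mul_nonneg hK0 (sub_nonneg.2 hTVg)),
      (by positivity : 0 ≤ T * (2 * N * G ^ 2 * (T : ℝ) ^ Vg))]
  have hfirst : ∑ n, max (g 1 n (x 1)) 0 ≤ N * G * (T : ℝ) ^ Vg := by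
    refine le_trans ?_ (le_mul_of_one_le_right (by positivity) hTVg)
    simpa using Finset.sum_le_sum fun n (_ : n ∈ Finset.univ) =>
      max_le (abs_le.1 (hgG 1 n _ hx1)).2 hG.le
  rw [Finset.sum_comm, ← Finset.add_sum_Ioc_eq_sum_Icc (by omega),
    show Finset.Ioc 1 T = Finset.Icc 2 T from (Finset.Icc_add_one_left_eq_Ioc 1 T).symm]
  exact (add_le_add hfirst hS).trans_eq (by ring)

/-- Corollary 1 (violation part): COLDQ with `α_t = t^((1−V_x)/2)`, `η = 1/T`,
`γ = ε·T` achieves `O(T^{V_g})` hard constraint violation, with explicit constant. -/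
theorem coldq_hard_violation_explicit
    (p N T : ℕ) (hT : 2 ≤ T) (R D G η γ ε Vx Vg Cx Cg : ℝ)
    (hR : 0 < R) (hVx0 : 0 ≤ Vx) (hVx1 : Vx ≤ 1)
    (hVg0 : 0 ≤ Vg) (hVg1 : Vg ≤ 1) (hCx : 0 ≤ Cx) (hCg : 0 ≤ Cg)
    (hε0 : 0 < ε) (hεG : ε < G)
    (hη : η = 1 / (T : ℝ)) (hγ : γ = ε * (T : ℝ))
    (𝒳 : Set (EuclideanSpace ℝ (Fin p)))
    (hXconv : Convex ℝ 𝒳)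
    (hXbdd : ∀ x ∈ 𝒳, ∀ y ∈ 𝒳, ‖x - y‖ ≤ R)
    (f : ℕ → EuclideanSpace ℝ (Fin p) → ℝ)
    (hfconv : ∀ t, ConvexOn ℝ 𝒳 (f t))
    (gradf : ℕ → EuclideanSpace ℝ (Fin p) → EuclideanSpace ℝ (Fin p))
    (hgradD : ∀ t, ∀ x ∈ 𝒳, ‖gradf t x‖ ≤ D)
    (hsub : ∀ t, ∀ x ∈ 𝒳, ∀ y ∈ 𝒳, f t x + ⟪gradf t x, y - x⟫ ≤ f t y)
    (g : ℕ → Fin N → EuclideanSpace ℝ (Fin p) → ℝ)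
    (hgconv : ∀ t n, ConvexOn ℝ 𝒳 (g t n))
    (hgG : ∀ t n, ∀ x ∈ 𝒳, |g t n x| ≤ G)
    (α : ℕ → ℝ) (hα : ∀ t, α t = (t : ℝ) ^ ((1 - Vx) / 2))
    (x : ℕ → EuclideanSpace ℝ (Fin p)) (hx1 : x 1 ∈ 𝒳)
    (Q : ℕ → Fin N → ℝ) (hQ1 : ∀ n, Q 1 n = γ)
    (hxX : ∀ t, 2 ≤ t → t ≤ T → x t ∈ 𝒳)
    (hxmin : ∀ t, 2 ≤ t → t ≤ T → ∀ y ∈ 𝒳,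
      ⟪gradf (t - 1) (x (t - 1)), x t - x (t - 1)⟫
          + α (t - 1) * ‖x t - x (t - 1)‖ ^ 2
          + ∑ n, Q (t - 1) n * max (g (t - 1) n (x t)) 0 ≤
        ⟪gradf (t - 1) (x (t - 1)), y - x (t - 1)⟫
          + α (t - 1) * ‖y - x (t - 1)‖ ^ 2
          + ∑ n, Q (t - 1) n * max (g (t - 1) n y) 0)
    (hQupd : ∀ t, 2 ≤ t → t ≤ T → ∀ n,
      Q t n = max ((1 - η) * Q (t - 1) n + max (g t n (x t)) 0) γ)
    (xstar : ℕ → EuclideanSpace ℝ (Fin p))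
    (hxstarX : ∀ t, 1 ≤ t → t ≤ T → xstar t ∈ 𝒳)
    (hxstarfeas : ∀ t, 1 ≤ t → t ≤ T → ∀ n, g t n (xstar t) ≤ 0)
    (hpath : ∑ t ∈ Finset.Icc 2 T, ‖xstar t - xstar (t - 1)‖ ≤ Cx * (T : ℝ) ^ Vx)
    (B : ℕ → ℝ) (hB0 : ∀ t, 2 ≤ t → t ≤ T → 0 ≤ B t)
    (hB : ∀ t, 2 ≤ t → t ≤ T → ∀ x ∈ 𝒳,
      Real.sqrt (∑ n, (g t n x - g (t - 1) n x) ^ 2) ≤ B t)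
    (hBsum : ∑ t ∈ Finset.Icc 2 T, B t ≤ Cg * (T : ℝ) ^ Vg) :
    ∑ n : Fin N, ∑ t ∈ Finset.Icc 1 T, max (g t n (x t)) 0 ≤
      ((G * Real.sqrt N * Cg + 2 * R * Cx + D ^ 2 / (2 * (1 + Vx))
          + D * R + 2 * N * G ^ 2 + R ^ 2) / ε + N * G)
        * (T : ℝ) ^ Vg :=
  coldq_hard_violation_explicit_general p N T hT R D G η γ ε Vx Vg Cx Cg hVx0 hVx1 hVg0 hCx hε0 hεG
    hη hγ 𝒳 hXconv hXbdd gradf hgradD g hgconv hgG α hα x hx1 Q hQ1 hxX hxmin hQupd xstar hxstarX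
    hxstarfeas hpath B hB hBsum
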